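/- Threshold-integral characterization of OpenworldAUC: assuming r(x_b) (conditioned on correct classification events) has a continuous distribution, ∫₀¹ HitRate_n(t) d MissRate_b(t) = P[y_b = g(x_b)] · P[y_n = h(x_n)] · P[r(x_b) > r(x_n) | y_b = g(x_b), y_n = h(x_n)] = P[r(x_b) > r(x_n), y_b = g(x_b), y_n = h(x_n)], where MissRate_b(t) = P[r(x_b) ≤ t] + P[r(x_b) > t, y_b ≠ g(x_b)] and HitRate_n(t) = P[r(x_n) ≤ t, y_n = h(x_n)]. -/

import Mathlib

/-! Splitting off the misclassified mass,
`MissRate_b t = P[y_b ≠ g(x_b)] + P[r(x_b) ≤ t, y_b = g(x_b)]`, so `d MissRate_b` is the law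
of `r(x_b)` on the event `y_b = g(x_b)`, which lives on `[0, 1]`.
Integrating `HitRate_n` against it is, by Tonelli, the product probability of
`r(x_n) ≤ r(x_b)` on both correctness events, and since `r(x_b)` has no atoms the tie set
`r(x_b) = r(x_n)` is null, so `≤` may be replaced by `<`. The conditional form is
`P[A | B] P[B] = P[A ∩ B]` for the product event `B`, whose probability factorises. -/

open MeasureTheory Set

namespace StieltjesFunction

theorem measure_eq_of_eq_add_toReal_Iic {F : StieltjesFunction ℝ} {ν : Measure ℝ}
    [IsFiniteMeasure ν] {c : ℝ} (hF : ∀ t, F t = c + (ν (Iic t)).toReal) : F.measure = ν := by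
  refine Measure.ext_of_Ioc _ _ fun a b hab => ?_
  rw [F.measure_Ioc, hF, hF, add_sub_add_left_eq_sub, ← measureReal_def, ← measureReal_def,
    ← measureReal_sdiff (Iic_subset_Iic.2 hab.le) measurableSet_Iic, Iic_sdiff_Iic,
    measureReal_def, ENNReal.ofReal_toReal (measure_ne_top _ _)]

end StieltjesFunction

namespace MeasureTheory

section

variable {Ω : Type*} [MeasurableSpace Ω] {μ : Measure Ω} [IsFiniteMeasure μ] {X : Ω → ℝ}
  {C : Set Ω}

theorem toReal_measure_le_add_toReal_measure_lt_inter_compl (hX : Measurable X)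
    (hC : MeasurableSet C) (t : ℝ) :
    (μ {ω | X ω ≤ t}).toReal + (μ ({ω | t < X ω} ∩ Cᶜ)).toReal
      = (μ Cᶜ).toReal + ((μ.restrict C).map X (Iic t)).toReal := by
  have hle : MeasurableSet (X ⁻¹' Iic t) := hX measurableSet_Iic
  rw [Measure.map_apply hX measurableSet_Iic, Measure.restrict_apply hle]
  simp only [← measureReal_def]
  have hsplit_le := measureReal_inter_add_sdiff (μ := μ) (s := X ⁻¹' Iic t) hC
  have hsplit_compl := measureReal_inter_add_sdiff (μ := μ) (s := Cᶜ) hle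
  have hgt : {ω | t < X ω} = (X ⁻¹' Iic t)ᶜ := by ext; simp
  rw [sdiff_eq] at hsplit_le hsplit_compl
  rw [hgt, show {ω | X ω ≤ t} = X ⁻¹' Iic t from rfl, inter_comm _ Cᶜ]
  rw [inter_comm _ Cᶜ] at hsplit_le
  linarith

end

section

variable {α β : Type*} [MeasurableSpace α] [MeasurableSpace β] {μ : Measure α} {ν : Measure β}
  {X : α → ℝ} {Y : β → ℝ}

theorem Measure.prod_setOf_eq_eq_zero [SFinite μ] [SFinite ν] (hX : Measurable X)
    (hY : Measurable Y) (hX_atomless : ∀ t, μ {a | X a = t} = 0) :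
    (μ.prod ν) {p | X p.1 = Y p.2} = 0 := by
  have hS : MeasurableSet {p : α × β | X p.1 = Y p.2} :=
    measurableSet_eq_fun (by fun_prop) (by fun_prop)
  rw [Measure.prod_apply_symm hS]
  simp [Set.preimage, hX_atomless]

theorem Measure.prod_setOf_lt_eq_prod_setOf_le [SFinite μ] [SFinite ν] (hX : Measurable X)
    (hY : Measurable Y) (hX_atomless : ∀ t, μ {a | X a = t} = 0) :
    (μ.prod ν) {p | Y p.2 < X p.1} = (μ.prod ν) {p | Y p.2 ≤ X p.1} := by
  have hsplit : {p : α × β | Y p.2 ≤ X p.1} = {p | Y p.2 < X p.1} ∪ {p | X p.1 = Y p.2} := by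
    ext p; simp [le_iff_lt_or_eq, eq_comm]
  rw [hsplit, measure_congr (union_ae_eq_left_of_ae_eq_empty (ae_eq_empty.2
    (Measure.prod_setOf_eq_eq_zero hX hY hX_atomless)))]

theorem integral_map_toReal_measure_setOf_le [IsFiniteMeasure μ] [IsFiniteMeasure ν]
    (hX : Measurable X) (hY : Measurable Y) :
    ∫ t, (ν {b | Y b ≤ t}).toReal ∂(μ.map X) = ((μ.prod ν) {p | Y p.2 ≤ X p.1}).toReal := by
  have hmono : Monotone fun t => ν {b | Y b ≤ t} := fun s t hst =>
    measure_mono fun b hb => le_trans hb hst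
  rw [integral_map hX.aemeasurable
      (hmono.measurable.ennreal_toReal).aestronglyMeasurable,
    integral_toReal (f := fun a => ν {b | Y b ≤ X a}) (hmono.measurable.comp hX).aemeasurable
      (ae_of_all _ fun _ => measure_lt_top _ _),
    Measure.prod_apply (measurableSet_le (by fun_prop) (by fun_prop))]
  rfl

end

end MeasureTheory

theorem stmt_12_general {Ωb Ωn : Type*} [MeasurableSpace Ωb] [MeasurableSpace Ωn]
    (μb : Measure Ωb) (μn : Measure Ωn)
    [IsProbabilityMeasure μb] [IsProbabilityMeasure μn]
    (Rb : Ωb → ℝ) (Rn : Ωn → ℝ) (Cb : Set Ωb) (Cn : Set Ωn)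
    (hRb : Measurable Rb) (hRn : Measurable Rn)
    (hCb : MeasurableSet Cb) (hCn : MeasurableSet Cn)
    (hrb : ∀ ω, Rb ω ∈ Set.Icc (0 : ℝ) 1)
    (hcont : ∀ t : ℝ, μb {ω | Rb ω = t} = 0)
    (F : StieltjesFunction ℝ)
    (hF : ∀ t, F t = (μb {ω | Rb ω ≤ t}).toReal + (μb ({ω | t < Rb ω} ∩ Cbᶜ)).toReal) :
    (∫ t in Set.Icc (0 : ℝ) 1, (μn ({ω | Rn ω ≤ t} ∩ Cn)).toReal ∂F.measure)
        = (μb Cb).toReal * (μn Cn).toReal *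
          ((ProbabilityTheory.cond (μb.prod μn) (Cb ×ˢ Cn))
            {p | Rn p.2 < Rb p.1}).toReal
      ∧ (μb Cb).toReal * (μn Cn).toReal *
          ((ProbabilityTheory.cond (μb.prod μn) (Cb ×ˢ Cn))
            {p | Rn p.2 < Rb p.1}).toReal
        = ((μb.prod μn) ({p | Rn p.2 < Rb p.1} ∩ Cb ×ˢ Cn)).toReal := by
  have hlaw : F.measure = (μb.restrict Cb).map Rb :=
    StieltjesFunction.measure_eq_of_eq_add_toReal_Iic fun t =>
      (hF t).trans (toReal_measure_le_add_toReal_measure_lt_inter_compl hRb hCb t)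
  have hsupp : F.measure.restrict (Icc 0 1) = F.measure := by
    rw [hlaw, Measure.restrict_map hRb measurableSet_Icc, preimage_eq_univ_iff.2
      (range_subset_iff.2 hrb), Measure.restrict_univ]
  have hatomless : ∀ t, μb.restrict Cb {ω | Rb ω = t} = 0 := fun t =>
    Measure.absolutelyContinuous_of_le Measure.restrict_le_self (hcont t)
  have hjoint : ∫ t in Icc (0 : ℝ) 1, (μn ({ω | Rn ω ≤ t} ∩ Cn)).toReal ∂F.measure
      = ((μb.prod μn) ({p | Rn p.2 < Rb p.1} ∩ Cb ×ˢ Cn)).toReal := by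
    calc ∫ t in Icc (0 : ℝ) 1, (μn ({ω | Rn ω ≤ t} ∩ Cn)).toReal ∂F.measure
        = ∫ t, (μn.restrict Cn {ω | Rn ω ≤ t}).toReal ∂(μb.restrict Cb).map Rb := by
          simp_rw [hsupp, hlaw,
            Measure.restrict_apply (t := {ω | Rn ω ≤ _}) (hRn measurableSet_Iic)]
      _ = ((μb.restrict Cb).prod (μn.restrict Cn) {p | Rn p.2 ≤ Rb p.1}).toReal :=
          integral_map_toReal_measure_setOf_le hRb hRn
      _ = ((μb.prod μn) ({p | Rn p.2 < Rb p.1} ∩ Cb ×ˢ Cn)).toReal := by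
          rw [← Measure.prod_setOf_lt_eq_prod_setOf_le hRb hRn hatomless, Measure.prod_restrict,
            Measure.restrict_apply (measurableSet_lt (by fun_prop) (by fun_prop))]
  have hcond : (μb Cb).toReal * (μn Cn).toReal *
      ((ProbabilityTheory.cond (μb.prod μn) (Cb ×ˢ Cn)) {p | Rn p.2 < Rb p.1}).toReal
      = ((μb.prod μn) ({p | Rn p.2 < Rb p.1} ∩ Cb ×ˢ Cn)).toReal := by
    rw [← ENNReal.toReal_mul, ← ENNReal.toReal_mul, ← Measure.prod_prod, mul_comm,
      ProbabilityTheory.cond_mul_eq_inter (hCb.prod hCn), inter_comm]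
  exact ⟨hjoint.trans hcond.symm, hcond⟩

/-- Threshold-integral characterization of OpenworldAUC: the Stieltjes integral
`∫₀¹ HitRate_n(t) dMissRate_b(t)` equals
`P[correct_b] · P[correct_n] · P[rank | correct_b, correct_n]`, which equals the joint
probability `P[r(x_b) > r(x_n), y_b = g(x_b), y_n = h(x_n)]`. -/
theorem stmt_12 {Ωb Ωn : Type*} [MeasurableSpace Ωb] [MeasurableSpace Ωn]
    (μb : Measure Ωb) (μn : Measure Ωn)
    [IsProbabilityMeasure μb] [IsProbabilityMeasure μn]
    (Rb : Ωb → ℝ) (Rn : Ωn → ℝ) (Cb : Set Ωb) (Cn : Set Ωn)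
    (hRb : Measurable Rb) (hRn : Measurable Rn)
    (hCb : MeasurableSet Cb) (hCn : MeasurableSet Cn)
    (hrb : ∀ ω, Rb ω ∈ Set.Icc (0 : ℝ) 1) (hrn : ∀ ω, Rn ω ∈ Set.Icc (0 : ℝ) 1)
    (hcont : ∀ t : ℝ, μb {ω | Rb ω = t} = 0)
    (F : StieltjesFunction ℝ)
    (hF : ∀ t, F t = (μb {ω | Rb ω ≤ t}).toReal + (μb ({ω | t < Rb ω} ∩ Cbᶜ)).toReal) :
    (∫ t in Set.Icc (0 : ℝ) 1, (μn ({ω | Rn ω ≤ t} ∩ Cn)).toReal ∂F.measure)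
        = (μb Cb).toReal * (μn Cn).toReal *
          ((ProbabilityTheory.cond (μb.prod μn) (Cb ×ˢ Cn))
            {p | Rn p.2 < Rb p.1}).toReal
      ∧ (μb Cb).toReal * (μn Cn).toReal *
          ((ProbabilityTheory.cond (μb.prod μn) (Cb ×ˢ Cn))
            {p | Rn p.2 < Rb p.1}).toReal
        = ((μb.prod μn) ({p | Rn p.2 < Rb p.1} ∩ Cb ×ˢ Cn)).toReal :=
  stmt_12_general μb μn Rb Rn Cb Cn hRb hRn hCb hCn hrb hcont F hF
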